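/- Let D be an almost skew diagram and let i be the maximum index with l_{i−1} > l_i. If Step A is permitted at row i but Step B is not, then V^{D^A} ≅ V^D as ℂ[Σ_D]-modules, where D^A is the result of Step A at row i; if Step B is permitted at row i but Step A is not, then V^{D^B} ≅ V^D as ℂ[Σ_D]-modules, where D^B is the result of Step B at row i. -/

import Mathlib

/-
Both steps only relabel the boxes of `D` by a permutation of the rows or of the columns, and
Specht modules are invariant under such relabellings: `R(D)` and `C(D)` change by conjugation by
an element of `Σ_D`, and right multiplication by that unit identifies the left ideals.

If Step B is not permitted then `r_{i-1} = r_i`, and Step A merely exchanges rows `i - 1` and `i`.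
If Step A is not permitted then `l_{i-1} ≥ r_i + 2`, so every row above `i` contains either all
or none of the columns `l_i, …, r_i + 1`, and these rows are untouched by Step B. Maximality of
`i` makes `l` weakly increasing from row `i` on, so below row `i` both `D` and `D^B` are
top-justified inside these columns, with the same row lengths. Hence they have the same multiset
of column heights, and a permutation of these columns carries `D` to `D^B`.
-/

open scoped ENat

/-- A diagram: a finite set of boxes `(i, j)` (row `i` from the top, column `j` from the left). -/
abbrev Dg := Finset (ℕ × ℕ)

/-- The set of column indices of boxes in row `i` of `D`. -/
def row (D : Dg) (i : ℕ) : Finset ℕ := (D.filter (fun b => b.1 = i)).image Prod.snd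

/-- `l_i`: the least column index in row `i`, with the convention `l_i = ∞` for an empty row. -/
noncomputable def lRow (D : Dg) (i : ℕ) : ℕ∞ := (row D i).inf (fun j => (j : ℕ∞))

/-- `r_i`: the greatest column index in row `i`, with the convention `r_i = 0` for an empty row. -/
def rRow (D : Dg) (i : ℕ) : ℕ := (row D i).sup id

/-- Index `i ≥ 2` with `l_{i-1} > l_i`. -/
def Violation (D : Dg) (i : ℕ) : Prop := 2 ≤ i ∧ lRow D i < lRow D (i - 1)

/-- `i` is the maximum index with `l_{i-1} > l_i`. -/
def MaxViolation (D : Dg) (i : ℕ) : Prop := Violation D i ∧ ∀ i', Violation D i' → i' ≤ i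

/-- No index `i ≥ 2` has `l_{i-1} > l_i`. -/
def TerminalD (D : Dg) : Prop := ∀ i, ¬ Violation D i

/-- Step A is permitted at row `i`: `l_{i-1} > l_i` and (`r_i ≥ l_{i-1} - 1` or row `i-1` empty). -/
def StepAOk (D : Dg) (i : ℕ) : Prop :=
  Violation D i ∧ (lRow D (i - 1) - 1 ≤ (rRow D i : ℕ∞) ∨ row D (i - 1) = ∅)

/-- `l_i ≤ q < l_{i-1}`: the columns affected by Step A at row `i`. -/
def InL (D : Dg) (i q : ℕ) : Prop := lRow D i ≤ (q : ℕ∞) ∧ (q : ℕ∞) < lRow D (i - 1)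

/-- `D'` is the result of performing Step A on `D` at row `i`: for each column
`l_i ≤ q < l_{i-1}`, membership of `(i, q)` and `(i-1, q)` is exchanged. -/
def IsStepA (D D' : Dg) (i : ℕ) : Prop :=
  ∀ p q : ℕ,
    (p = i → InL D i q → ((p, q) ∈ D' ↔ (i - 1, q) ∈ D)) ∧
    (p = i - 1 → InL D i q → ((p, q) ∈ D' ↔ (i, q) ∈ D)) ∧
    (¬((p = i ∨ p = i - 1) ∧ InL D i q) → ((p, q) ∈ D' ↔ (p, q) ∈ D))

/-- Step B is permitted at row `i`: `l_{i-1} > l_i` and `r_i ≤ r_{i-1} - 1`. -/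
def StepBOk (D : Dg) (i : ℕ) : Prop :=
  Violation D i ∧ rRow D i ≤ rRow D (i - 1) - 1

/-- The rows affected by Step B at row `i`: rows `p ≥ i` with `l_p = l_i`. -/
def BRow (D : Dg) (i p : ℕ) : Prop := i ≤ p ∧ lRow D p = lRow D i

/-- `D'` is the result of performing Step B on `D` at row `i`: in each row `p ≥ i` with
`l_p = l_i`, the box `(p, l_p)` is removed and the box `(p, r_p + 1)` is added. -/
def IsStepB (D D' : Dg) (i : ℕ) : Prop :=
  ∀ p q : ℕ,
    (BRow D i p →
      ((p, q) ∈ D' ↔ (((p, q) ∈ D ∧ (q : ℕ∞) ≠ lRow D p) ∨ q = rRow D p + 1))) ∧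
    (¬ BRow D i p → ((p, q) ∈ D' ↔ (p, q) ∈ D))

/-- One step of Algorithm 1: at the maximum index `i` with `l_{i-1} > l_i`, perform a
permitted Step A or Step B. -/
def AlgStep (D D' : Dg) : Prop :=
  ∃ i, MaxViolation D i ∧ ((StepAOk D i ∧ IsStepA D D' i) ∨ (StepBOk D i ∧ IsStepB D D' i))

/-- An execution of Algorithm 1 starting from `D0`: a finite sequence of diagrams beginning
at `D0`, each obtained from the previous by a step of Algorithm 1, ending at a terminal
diagram. -/
def IsExec (D0 : Dg) (L : List Dg) : Prop :=
  L.head? = some D0 ∧ L.Chain' AlgStep ∧ ∀ Dl, L.getLast? = some Dl → TerminalD Dl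

/-- The indices of nonempty rows of `D`, from top to bottom. -/
def rowIdx (D : Dg) : List ℕ := (D.image Prod.fst).sort (· ≤ ·)

/-- The lengths of the nonempty rows of `D`, read from top to bottom. -/
def rowLengths (D : Dg) : List ℕ := (rowIdx D).map (fun p => (row D p).card)

/-- The execution `L` terminates at a diagram whose nonempty rows, read from top to bottom,
have lengths `ν 1, ν 2, …`. -/
def EndsAt (L : List Dg) (ν : ℕ → ℕ) : Prop :=
  ∃ Dl, L.getLast? = some Dl ∧ ∀ m : ℕ, (rowLengths Dl).getD m 0 = ν (m + 1)

/-- A partition, written as a weakly decreasing function on indices `1, 2, …`. -/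
def IsPartition (f : ℕ → ℕ) : Prop := f 0 = 0 ∧ ∀ p, 1 ≤ p → f (p + 1) ≤ f p

/-- The partition `f` is contained in the `k × w` rectangle. -/
def InRect (f : ℕ → ℕ) (k w : ℕ) : Prop := (∀ p, k < p → f p = 0) ∧ ∀ p, f p ≤ w

/-- The skew Young diagram `lam / mu` (boxes of `lam` not in `mu`), rows `1, …, k`. -/
def skewD (lam mu : ℕ → ℕ) (k : ℕ) : Dg :=
  (Finset.Icc 1 k).biUnion (fun p => (Finset.Icc (mu p + 1) (lam p)).image (fun q => (p, q)))

/-- `lam^∨`, the complementary partition of `lam` inside the `k × w` rectangle. -/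
def dualP (lam : ℕ → ℕ) (k w : ℕ) : ℕ → ℕ :=
  fun p => if 1 ≤ p ∧ p ≤ k then w - lam (k + 1 - p) else 0

/-- `D` is row convex. -/
def RowConvex (D : Dg) : Prop :=
  ∀ i j j' j'', (i, j) ∈ D → (i, j') ∈ D → j ≤ j'' → j'' ≤ j' → (i, j'') ∈ D

/-- `l` is weakly increasing on positions `s, s+1, …, t`. -/
def MonoL (l : ℕ → ℕ∞) (s t : ℕ) : Prop := ∀ p q, s ≤ p → p ≤ q → q ≤ t → l p ≤ l q

/-- `l` is weakly decreasing on positions `s, s+1, …, t`. -/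
def AntiL (l : ℕ → ℕ∞) (s t : ℕ) : Prop := ∀ p q, s ≤ p → p ≤ q → q ≤ t → l q ≤ l p

/-- The sequence `(l_1, …, l_k)` of leftmost column indices of `D` has, for some indices
`1 ≤ a ≤ i ≤ k`, either the form `l_i ≤ l_{i+1} ≤ … ≤ l_k ≤ l_{i-1} ≤ l_{i-2} ≤ … ≤ l_1`,
or the form
`l_a ≤ … ≤ l_{i-2} ≤ l_i ≤ … ≤ l_k ≤ l_{i-1} ≤ l_{a-1} ≤ … ≤ l_1`. -/
def LShape (D : Dg) (k : ℕ) : Prop :=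
  ∃ a i, 1 ≤ a ∧ a ≤ i ∧ i ≤ k ∧
    ((MonoL (lRow D) i k ∧ (2 ≤ i → lRow D k ≤ lRow D (i - 1)) ∧ AntiL (lRow D) 1 (i - 1)) ∨
     (2 ≤ i ∧ MonoL (lRow D) a (i - 2) ∧ (a ≤ i - 2 → lRow D (i - 2) ≤ lRow D i) ∧
      MonoL (lRow D) i k ∧ lRow D k ≤ lRow D (i - 1) ∧
      (2 ≤ a → lRow D (i - 1) ≤ lRow D (a - 1)) ∧ AntiL (lRow D) 1 (a - 1)))

/-- `D` is almost skew with nonempty rows exactly `1, …, k`: it is row convex, its `r_i`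
are weakly decreasing, and its `l_i` satisfy one of the two inequality chains above. -/
def AlmostSkew (D : Dg) (k : ℕ) : Prop :=
  (∀ p, (row D p).Nonempty ↔ 1 ≤ p ∧ p ≤ k) ∧
  RowConvex D ∧
  (∀ p q, 1 ≤ p → p ≤ q → q ≤ k → rRow D q ≤ rRow D p) ∧
  LShape D k

/-- The sum `Σ σ` over all permutations preserving the value of `g` (e.g. the row or the
column of every box), in the group algebra `ℂ[Perm α]`. -/
noncomputable def Rsum {α : Type} [Fintype α] [DecidableEq α] (g : α → ℕ) :
    MonoidAlgebra ℂ (Equiv.Perm α) :=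
  ∑ σ ∈ Finset.univ.filter (fun σ : Equiv.Perm α => ∀ b, g (σ b) = g b),
    MonoidAlgebra.single σ 1

/-- The signed sum `Σ sgn(σ)·σ` over all permutations preserving the value of `g`, in the
group algebra `ℂ[Perm α]`. -/
noncomputable def Csum {α : Type} [Fintype α] [DecidableEq α] (g : α → ℕ) :
    MonoidAlgebra ℂ (Equiv.Perm α) :=
  ∑ σ ∈ Finset.univ.filter (fun σ : Equiv.Perm α => ∀ b, g (σ b) = g b),
    MonoidAlgebra.single σ ((Equiv.Perm.sign σ : ℤ) : ℂ)

open Finset MonoidAlgebra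

section Specht

variable {α : Type} [Fintype α] [DecidableEq α]

/-- `V^D = ℂ[Σ_D]·C(D)·R(D)` for the diagram whose box `b` lies in column `c b` and row `r b`. -/
noncomputable def spechtModule (c r : α → ℕ) :
    Submodule (MonoidAlgebra ℂ (Equiv.Perm α)) (MonoidAlgebra ℂ (Equiv.Perm α)) :=
  Submodule.span _ {Csum c * Rsum r}

theorem Rsum_comp_of_injective (g : α → ℕ) {η : ℕ → ℕ} (hη : η.Injective) :
    Rsum (fun b => η (g b)) = Rsum g := by
  simp only [Rsum, hη.eq_iff]

theorem Csum_comp_of_injective (g : α → ℕ) {η : ℕ → ℕ} (hη : η.Injective) :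
    Csum (fun b => η (g b)) = Csum g := by
  simp only [Csum, hη.eq_iff]

theorem spechtModule_comp_of_injective (c r : α → ℕ) {ζ η : ℕ → ℕ} (hζ : ζ.Injective)
    (hη : η.Injective) :
    spechtModule (fun b => ζ (c b)) (fun b => η (r b)) = spechtModule c r := by
  rw [spechtModule, Csum_comp_of_injective c hζ, Rsum_comp_of_injective r hη, spechtModule]

theorem sum_single_comp_perm (g : α → ℕ) (τ : Equiv.Perm α) (w : Equiv.Perm α → ℂ)
    (hw : ∀ σ, w (τ * σ * τ⁻¹) = w σ) :
    ∑ σ ∈ univ.filter (fun σ : Equiv.Perm α => ∀ b, g (τ (σ b)) = g (τ b)), single σ (w σ) =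
      single τ⁻¹ 1 * (∑ σ ∈ univ.filter (fun σ : Equiv.Perm α => ∀ b, g (σ b) = g b),
        single σ (w σ)) * single τ 1 := by
  rw [mul_sum, sum_mul]
  refine sum_equiv (MulAut.conj τ).toEquiv (fun σ => ?_) (fun σ _ => ?_)
  · simp only [mem_filter, mem_univ, true_and, MulEquiv.toEquiv_eq_coe, MulEquiv.coe_toEquiv,
      MulAut.conj_apply, Equiv.Perm.mul_apply]
    exact ⟨fun h b => by simpa using h (τ⁻¹ b), fun h b => by simpa using h (τ b)⟩
  · rw [MulEquiv.toEquiv_eq_coe, MulEquiv.coe_toEquiv, MulAut.conj_apply, single_mul_single,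
      single_mul_single, hw]
    simp [mul_assoc]

theorem Rsum_comp_perm (g : α → ℕ) (τ : Equiv.Perm α) :
    Rsum (fun b => g (τ b)) = single τ⁻¹ 1 * Rsum g * single τ 1 :=
  sum_single_comp_perm g τ _ fun _ => rfl

theorem Csum_comp_perm (g : α → ℕ) (τ : Equiv.Perm α) :
    Csum (fun b => g (τ b)) = single τ⁻¹ 1 * Csum g * single τ 1 :=
  sum_single_comp_perm g τ _ fun σ => by
    rw [Equiv.Perm.sign_mul, Equiv.Perm.sign_mul, Equiv.Perm.sign_inv, mul_right_comm,
      Int.units_mul_self, one_mul]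

theorem nonempty_span_mul_units_equiv {R : Type*} [Ring R] (x : R) (u : Rˣ) :
    Nonempty (Submodule.span R {x * u} ≃ₗ[R] Submodule.span R {x}) := by
  let e := DistribMulAction.toLinearEquiv R R (Units.opEquiv.symm (MulOpposite.op u⁻¹))
  have he : e (x * u) = x := Units.mul_inv_cancel_right x u
  exact ⟨(e.submoduleMap _).trans (LinearEquiv.ofEq _ _ (by
    rw [Submodule.map_span, Set.image_singleton, LinearEquiv.coe_coe, he]))⟩

theorem nonempty_spechtModule_comp_perm (c r : α → ℕ) (τ : Equiv.Perm α) :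
    Nonempty (spechtModule (fun b => c (τ b)) (fun b => r (τ b)) ≃ₗ[MonoidAlgebra ℂ (Equiv.Perm α)]
      spechtModule c r) := by
  have hTT' : single τ 1 * single τ⁻¹ 1 = (1 : MonoidAlgebra ℂ (Equiv.Perm α)) := by
    simp [single_mul_single, one_def]
  let u : (MonoidAlgebra ℂ (Equiv.Perm α))ˣ :=
    ⟨single τ 1, single τ⁻¹ 1, hTT', by simp [single_mul_single, one_def]⟩
  have hconj : Csum (fun b => c (τ b)) * Rsum (fun b => r (τ b)) =
      u⁻¹ • (Csum c * Rsum r * u) := by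
    have hcancel (x : MonoidAlgebra ℂ (Equiv.Perm α)) : single τ 1 * (single τ⁻¹ 1 * x) = x := by
      rw [← mul_assoc, hTT', one_mul]
    rw [Csum_comp_perm, Rsum_comp_perm, Units.smul_def]
    simp only [u, Units.inv_mk, smul_eq_mul, mul_assoc, hcancel]
  rw [spechtModule, hconj, Submodule.span_singleton_group_smul_eq]
  exact nonempty_span_mul_units_equiv _ u

end Specht

theorem nonempty_spechtModule_equiv_of_mem_iff {D D' : Dg} (ρ κ : Equiv.Perm ℕ)
    (h : ∀ p q, (ρ p, κ q) ∈ D' ↔ (p, q) ∈ D)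
    (φ : {x : ℕ × ℕ // x ∈ D} ≃ {x : ℕ × ℕ // x ∈ D'}) :
    Nonempty (spechtModule (fun b => (φ b).val.2) (fun b => (φ b).val.1) ≃ₗ[MonoidAlgebra ℂ
      (Equiv.Perm {x : ℕ × ℕ // x ∈ D})] spechtModule (fun b : {x : ℕ × ℕ // x ∈ D} => b.val.2)
        (fun b => b.val.1)) := by
  let β : {x : ℕ × ℕ // x ∈ D} ≃ {x : ℕ × ℕ // x ∈ D'} :=
    (ρ.prodCongr κ).subtypeEquiv fun x => (h x.1 x.2).symm
  let τ : Equiv.Perm {x : ℕ × ℕ // x ∈ D} := φ.trans β.symm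
  have hφ (b) : φ b = β (τ b) := by rw [Equiv.trans_apply, Equiv.apply_symm_apply]
  have hcol : (fun b => (φ b).val.2) = fun b => κ (τ b).val.2 := funext fun b => by rw [hφ]; rfl
  have hrow : (fun b => (φ b).val.1) = fun b => ρ (τ b).val.1 := funext fun b => by rw [hφ]; rfl
  rw [hcol, hrow, spechtModule_comp_of_injective _ _ κ.injective ρ.injective]
  exact nonempty_spechtModule_comp_perm (fun b : {x : ℕ × ℕ // x ∈ D} => b.val.2)
    (fun b => b.val.1) τ

section Diagram

variable {D : Dg} {p q : ℕ}

theorem mem_row_iff : q ∈ row D p ↔ (p, q) ∈ D := by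
  simp [row]

theorem lRow_le_of_mem (h : (p, q) ∈ D) : lRow D p ≤ q :=
  inf_le (mem_row_iff.2 h)

theorem le_rRow_of_mem (h : (p, q) ∈ D) : q ≤ rRow D p :=
  le_sup (f := id) (mem_row_iff.2 h)

theorem lRow_ne_top_iff : lRow D p ≠ ⊤ ↔ (row D p).Nonempty := by
  refine ⟨fun h => ?_, fun h => ?_⟩
  · by_contra he
    exact h (by simp [lRow, not_nonempty_iff_eq_empty.1 he])
  · obtain ⟨j, -, hj⟩ := exists_mem_eq_inf _ h fun j : ℕ => (j : ℕ∞)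
    rw [lRow, hj]
    exact ENat.natCast_ne_top j

theorem exists_mem_lRow_eq (h : lRow D p ≠ ⊤) : ∃ j : ℕ, lRow D p = j ∧ (p, j) ∈ D := by
  obtain ⟨j, hj, hje⟩ := exists_mem_eq_inf _ (lRow_ne_top_iff.1 h) fun j : ℕ => (j : ℕ∞)
  exact ⟨j, hje, mem_row_iff.1 hj⟩

theorem mem_rRow (h : (row D p).Nonempty) : (p, rRow D p) ∈ D := by
  obtain ⟨j, hj, hje⟩ := exists_mem_eq_sup _ h id
  rw [rRow, hje]
  exact mem_row_iff.1 hj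

theorem rRow_eq_zero (h : row D p = ∅) : rRow D p = 0 := by
  simp [rRow, h]

theorem RowConvex.mem_iff (hD : RowConvex D) : (p, q) ∈ D ↔ lRow D p ≤ q ∧ q ≤ rRow D p := by
  refine ⟨fun h => ⟨lRow_le_of_mem h, le_rRow_of_mem h⟩, fun ⟨hl, hr⟩ => ?_⟩
  obtain ⟨j, hj, hjD⟩ := exists_mem_lRow_eq (ne_top_of_le_ne_top (ENat.natCast_ne_top q) hl)
  rw [hj, Nat.cast_le] at hl
  exact hD p j _ q hjD (mem_rRow ⟨j, mem_row_iff.2 hjD⟩) hl hr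

variable {k : ℕ}

theorem AlmostSkew.le_of_lRow_ne_top (hAS : AlmostSkew D k) (h : lRow D p ≠ ⊤) :
    1 ≤ p ∧ p ≤ k :=
  (hAS.1 p).1 (lRow_ne_top_iff.1 h)

theorem AlmostSkew.lRow_ne_top (hAS : AlmostSkew D k) (hp : 1 ≤ p) (hpk : p ≤ k) :
    lRow D p ≠ ⊤ :=
  lRow_ne_top_iff.2 ((hAS.1 p).2 ⟨hp, hpk⟩)

theorem AlmostSkew.rRow_antitone (hAS : AlmostSkew D k) (hp : 1 ≤ p) (hpq : p ≤ q) :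
    rRow D q ≤ rRow D p := by
  by_cases hq : q ≤ k
  · exact hAS.2.2.1 p q hp hpq hq
  · rw [rRow_eq_zero (not_nonempty_iff_eq_empty.1 fun h => hq ((hAS.1 q).1 h).2)]
    exact Nat.zero_le _

end Diagram

theorem MaxViolation.lRow_mono {D : Dg} {i p q : ℕ} (hmax : MaxViolation D i) (hip : i ≤ p)
    (hpq : p ≤ q) : lRow D p ≤ lRow D q := by
  induction q, hpq using Nat.le_induction with
  | base => exact le_rfl
  | succ q hpq ih =>
    refine ih.trans (not_lt.1 fun hlt => ?_)
    have := hmax.2 (q + 1) ⟨by have := hmax.1.1; omega, by simpa using hlt⟩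
    omega

/-- When Step B is not permitted, rows `i - 1` and `i` end in the same column, so Step A just
swaps them. -/
theorem isStepA_mem_swap_iff {D DA : Dg} {k i : ℕ} (hAS : AlmostSkew D k) (hv : Violation D i)
    (hnB : ¬StepBOk D i) (hDA : IsStepA D DA i) (p q : ℕ) :
    (Equiv.swap (i - 1) i p, q) ∈ DA ↔ (p, q) ∈ D := by
  have hi := hv.1
  have hr : rRow D (i - 1) = rRow D i := by
    have := hAS.rRow_antitone (p := i - 1) (q := i) (by omega) (by omega)
    have : ¬rRow D i ≤ rRow D (i - 1) - 1 := fun h => hnB ⟨hv, h⟩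
    omega
  have hrows (hq : ¬InL D i q) : (i - 1, q) ∈ D ↔ (i, q) ∈ D := by
    rw [hAS.2.1.mem_iff, hAS.2.1.mem_iff, hr]
    exact and_congr_left' ⟨hv.2.le.trans, fun h => not_lt.1 fun h' => hq ⟨h, h'⟩⟩
  by_cases hpi : p = i
  · subst hpi
    rw [Equiv.swap_apply_right]
    by_cases hq : InL D p q
    · exact (hDA _ q).2.1 rfl hq
    · rw [(hDA _ q).2.2 fun h => hq h.2, hrows hq]
  by_cases hpi1 : p = i - 1
  · subst hpi1
    rw [Equiv.swap_apply_left]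
    by_cases hq : InL D i q
    · exact (hDA _ q).1 rfl hq
    · rw [(hDA _ q).2.2 fun h => hq h.2, hrows hq]
  rw [Equiv.swap_apply_of_ne_of_ne hpi1 hpi]
  exact (hDA p q).2.2 fun ⟨h, _⟩ => h.elim hpi hpi1

theorem card_filter_eq_of_card_filter_le {ι : Type*} (s : Finset ι) {f g : ι → ℕ}
    (h : ∀ v, #(s.filter (v ≤ f ·)) = #(s.filter (v ≤ g ·))) (v : ℕ) :
    #(s.filter (f · = v)) = #(s.filter (g · = v)) := by
  classical
  have key (f : ι → ℕ) :
      #(s.filter (f · = v)) = #(s.filter (v ≤ f ·)) - #(s.filter (v + 1 ≤ f ·)) := by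
    rw [← card_sdiff_of_subset (monotone_filter_right s fun c _ (h : v + 1 ≤ f c) => by omega)]
    congr 1
    ext c
    simp only [mem_filter, mem_sdiff]
    grind
  rw [key f, key g, h, h]

theorem exists_perm_eq_of_card_filter_eq {α β : Type*} [DecidableEq α] [DecidableEq β]
    {s : Finset α} {f g : α → β} (h : ∀ v, #(s.filter (f · = v)) = #(s.filter (g · = v))) :
    ∃ κ : Equiv.Perm α, (∀ a ∉ s, κ a = a) ∧ ∀ a ∈ s, κ a ∈ s ∧ g (κ a) = f a := by
  have hcard (f : α → β) (v : β) : Fintype.card {a : s // f a = v} = #(s.filter (f · = v)) := by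
    rw [← Fintype.card_coe]
    exact Fintype.card_congr ((Equiv.subtypeSubtypeEquivSubtypeInter (· ∈ s) (f · = v)).trans
      (Equiv.subtypeEquivRight fun x => by simp))
  let e : Equiv.Perm s :=
    Equiv.ofFiberEquiv (f := fun a : s => f a) (g := fun a : s => g a)
    fun v => Fintype.equivOfCardEq (by rw [hcard, hcard, h])
  have he (a : s) : g (e a) = f a :=
    Equiv.ofFiberEquiv_map (f := fun a : s => f a) (g := fun a : s => g a) _ a
  refine ⟨Equiv.Perm.ofSubtype e, fun a ha => Equiv.Perm.ofSubtype_apply_of_not_mem e ha,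
    fun a ha => ?_⟩
  rw [Equiv.Perm.ofSubtype_apply_of_mem e ha]
  exact ⟨(e ⟨a, ha⟩).2, he _⟩

def TopJustifiedFrom (X : Dg) (i : ℕ) : Prop :=
  ∀ p p' q, i ≤ p' → p' ≤ p → (p, q) ∈ X → (p', q) ∈ X

def colHeight (X : Dg) (i q : ℕ) : ℕ := #(X.filter fun b => i ≤ b.1 ∧ b.2 = q)

theorem TopJustifiedFrom.mem_iff_lt_colHeight {X : Dg} {i p q : ℕ} (hX : TopJustifiedFrom X i)
    (hip : i ≤ p) : (p, q) ∈ X ↔ p < i + colHeight X i q := by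
  constructor
  · intro h
    have : #(Icc i p) ≤ colHeight X i q :=
      card_le_card_of_injOn (fun p' => (p', q))
        (fun p' hp' => by
          rw [coe_Icc, Set.mem_Icc] at hp'
          exact mem_filter.2 ⟨hX p p' q hp'.1 hp'.2 h, hp'.1, rfl⟩)
        fun _ _ _ _ h => (Prod.mk.inj h).1
    rw [Nat.card_Icc] at this
    omega
  · intro h
    by_contra hpX
    have : colHeight X i q ≤ #(Ico i p) :=
      card_le_card_of_injOn Prod.fst
        (fun b hb => by
          obtain ⟨hbX, hib, rfl⟩ := mem_filter.1 hb
          exact mem_Ico.2 ⟨hib, not_le.1 fun hpb => hpX (hX b.1 p b.2 hip hpb hbX)⟩)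
        fun a ha b hb h => Prod.ext h ((mem_filter.1 ha).2.2.trans (mem_filter.1 hb).2.2.symm)
    rw [Nat.card_Ico] at this
    omega

/-- Below row `i` both diagrams have the same multiset of column heights in `I`: the conjugate
of their common row lengths. -/
theorem exists_perm_col_of_card_row_eq {X Y : Dg} {i : ℕ} (I : Finset ℕ)
    (hXY : ∀ p q, p < i → ((p, q) ∈ X ↔ (p, q) ∈ Y))
    (hXI : ∀ p c c', p < i → c ∈ I → c' ∈ I → (p, c) ∈ X → (p, c') ∈ X)
    (hXsub : ∀ p q, i ≤ p → (p, q) ∈ X → q ∈ I) (hYsub : ∀ p q, i ≤ p → (p, q) ∈ Y → q ∈ I)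
    (hX : TopJustifiedFrom X i) (hY : TopJustifiedFrom Y i)
    (hrow : ∀ p, i ≤ p → #(row X p) = #(row Y p)) :
    ∃ κ : Equiv.Perm ℕ, ∀ p q, (p, κ q) ∈ Y ↔ (p, q) ∈ X := by
  have hrowI {Z : Dg} (hZsub : ∀ p q, i ≤ p → (p, q) ∈ Z → q ∈ I) (hZ : TopJustifiedFrom Z i)
      (v : ℕ) : #(I.filter (v + 1 ≤ colHeight Z i ·)) = #(row Z (i + v)) := by
    congr 1
    ext c
    have hmem := hZ.mem_iff_lt_colHeight (p := i + v) (q := c) (by omega)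
    rw [mem_filter, mem_row_iff, hmem]
    exact ⟨fun h => by omega, fun h => ⟨hZsub _ _ (by omega) (hmem.2 h), by omega⟩⟩
  obtain ⟨κ, hκout, hκ⟩ := exists_perm_eq_of_card_filter_eq
    (card_filter_eq_of_card_filter_le I (f := colHeight X i) (g := colHeight Y i) fun v => by
      cases v with
      | zero => simp
      | succ v => rw [hrowI hXsub hX, hrowI hYsub hY, hrow _ (by omega)])
  refine ⟨κ, fun p q => ?_⟩
  by_cases hq : q ∈ I
  · obtain ⟨hκI, hκq⟩ := hκ q hq
    rcases lt_or_ge p i with hp | hp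
    · rw [← hXY p _ hp]
      exact ⟨hXI p _ _ hp hκI hq, hXI p _ _ hp hq hκI⟩
    · rw [hY.mem_iff_lt_colHeight hp, hX.mem_iff_lt_colHeight hp, hκq]
  · rw [hκout q hq]
    rcases lt_or_ge p i with hp | hp
    · exact (hXY p q hp).symm
    · exact ⟨fun h => absurd (hYsub p q hp h) hq, fun h => absurd (hXsub p q hp h) hq⟩

theorem LShape.lRow_le_of_lt {D : Dg} {k i p : ℕ} (hL : LShape D k) (hik : i ≤ k)
    (hv : Violation D i) (hp : 1 ≤ p) (hpi : p < i) (hlt : lRow D p < lRow D (i - 1)) :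
    lRow D p ≤ lRow D i := by
  obtain ⟨hi, hvi⟩ := hv
  obtain ⟨a, j, ha, haj, hjk, ⟨mono, -, anti⟩ | ⟨hj, mono₁, bridge₁, mono₂, hkj, bridge₂, anti⟩⟩ :=
    hL
  · have hij : i ≤ j := not_lt.1 fun h => hvi.not_ge (mono _ _ (by omega) (by omega) hik)
    exact absurd (anti p (i - 1) hp (by omega) (by omega)) hlt.not_ge
  · have hij : i ≤ j := not_lt.1 fun h => hvi.not_ge (mono₂ _ _ (by omega) (by omega) hik)
    have hai : a < i := not_le.1 fun h => hlt.not_ge (anti p (i - 1) hp (by omega) (by omega))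
    obtain rfl : j = i := by
      by_contra hne
      by_cases h : i ≤ j - 2
      · exact hvi.not_ge (mono₁ _ _ (by omega) (by omega) h)
      · obtain rfl : j = i + 1 := by omega
        have h₁ := bridge₁ (by omega)
        have h₃ := hkj
        rw [show i + 1 - 2 = i - 1 by omega] at h₁
        rw [show i + 1 - 1 = i by omega] at h₃
        exact hvi.not_ge (h₁.trans ((mono₂ _ _ le_rfl hjk le_rfl).trans h₃))
    by_cases hpa : p < a
    · exact absurd ((bridge₂ (by omega)).trans (anti p (a - 1) hp (by omega) le_rfl)) hlt.not_ge
    · rcases eq_or_lt_of_le (show p ≤ j - 1 by omega) with rfl | hpj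
      · exact absurd hlt (lt_irrefl _)
      · exact (mono₁ p (j - 2) (by omega) (by omega) le_rfl).trans (bridge₁ (by omega))

section StepB

variable {D DB : Dg} {k i l : ℕ}

theorem BRow.of_le (hmax : MaxViolation D i) {p p' : ℕ} (hp : BRow D i p) (hip' : i ≤ p')
    (hp'p : p' ≤ p) : BRow D i p' :=
  ⟨hip', le_antisymm (hp.2 ▸ hmax.lRow_mono hip' hp'p) (hmax.lRow_mono le_rfl hip')⟩

theorem lt_lRow_of_not_bRow (hmax : MaxViolation D i) (hl : lRow D i = l) {p : ℕ} (hip : i ≤ p)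
    (hp : ¬BRow D i p) : (l : ℕ∞) < lRow D p :=
  hl ▸ lt_of_le_of_ne (hmax.lRow_mono le_rfl hip) fun h => hp ⟨hip, h.symm⟩

theorem isStepB_mem_iff_of_bRow (hD : RowConvex D) (hDB : IsStepB D DB i) (hl : lRow D i = l)
    {p q : ℕ} (hp : BRow D i p) : (p, q) ∈ DB ↔ l + 1 ≤ q ∧ q ≤ rRow D p + 1 := by
  have hlp : lRow D p = l := hp.2.trans hl
  obtain ⟨j, hj, hjD⟩ := exists_mem_lRow_eq (hlp ▸ ENat.natCast_ne_top l : lRow D p ≠ ⊤)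
  have hjl : j = l := by exact_mod_cast hj.symm.trans hlp
  have hlr := le_rRow_of_mem hjD
  rw [(hDB p q).1 hp, hD.mem_iff, hlp, Nat.cast_le, Ne, Nat.cast_inj]
  omega

theorem card_row_of_isStepB (hD : RowConvex D) (hDB : IsStepB D DB i) (hl : lRow D i = l) (p : ℕ) :
    #(row DB p) = #(row D p) := by
  by_cases hp : BRow D i p
  · have hrowD : row D p = Icc l (rRow D p) := by
      ext q
      rw [mem_row_iff, hD.mem_iff, hp.2, hl, Nat.cast_le, mem_Icc]
    have hrowDB : row DB p = Icc (l + 1) (rRow D p + 1) := by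
      ext q
      rw [mem_row_iff, isStepB_mem_iff_of_bRow hD hDB hl hp, mem_Icc]
    rw [hrowD, hrowDB, Nat.card_Icc, Nat.card_Icc]
    omega
  · congr 1
    ext q
    rw [mem_row_iff, mem_row_iff, (hDB p q).2 hp]

theorem topJustifiedFrom_of_maxViolation (hAS : AlmostSkew D k) (hmax : MaxViolation D i) :
    TopJustifiedFrom D i := by
  intro p p' q hip' hp'p h
  rw [hAS.2.1.mem_iff] at h ⊢
  exact ⟨(hmax.lRow_mono hip' hp'p).trans h.1,
    h.2.trans (hAS.rRow_antitone (by have := hmax.1.1; omega) hp'p)⟩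

theorem topJustifiedFrom_of_isStepB (hAS : AlmostSkew D k) (hmax : MaxViolation D i)
    (hl : lRow D i = l) (hDB : IsStepB D DB i) : TopJustifiedFrom DB i := by
  intro p p' q hip' hp'p h
  have hr := hAS.rRow_antitone (p := p') (q := p) (by have := hmax.1.1; omega) hp'p
  by_cases hp : BRow D i p
  · rw [isStepB_mem_iff_of_bRow hAS.2.1 hDB hl hp] at h
    rw [isStepB_mem_iff_of_bRow hAS.2.1 hDB hl (hp.of_le hmax hip' hp'p)]
    omega
  rw [(hDB p q).2 hp] at h
  by_cases hp' : BRow D i p'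
  · rw [isStepB_mem_iff_of_bRow hAS.2.1 hDB hl hp']
    have hlq := (lt_lRow_of_not_bRow hmax hl (hip'.trans hp'p) hp).trans_le (lRow_le_of_mem h)
    have hqr := le_rRow_of_mem h
    rw [Nat.cast_lt] at hlq
    omega
  rw [(hDB p' q).2 hp']
  exact topJustifiedFrom_of_maxViolation hAS hmax p p' q hip' hp'p h

/-- As Step A is not permitted, `l_{i-1} ≥ r_i + 2`, so a row above `i` meeting these columns has
`l_p < l_{i-1}`, which the shape of `l` turns into `l_p ≤ l_i`. -/
theorem mem_iff_lRow_le_of_not_stepAOk (hAS : AlmostSkew D k) (hmax : MaxViolation D i)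
    (hl : lRow D i = l) (hnA : ¬StepAOk D i) {p c : ℕ} (hpi : p < i)
    (hc : c ∈ Icc l (rRow D i + 1)) : (p, c) ∈ D ↔ lRow D p ≤ l := by
  have hi := hmax.1.1
  have hik : i ≤ k := (hAS.le_of_lRow_ne_top (hl ▸ ENat.natCast_ne_top l)).2
  obtain ⟨m, hm, hmD⟩ := exists_mem_lRow_eq (hAS.lRow_ne_top (p := i - 1) (by omega) (by omega))
  have hgap : rRow D i + 2 ≤ m := by
    have : ¬lRow D (i - 1) - 1 ≤ rRow D i := fun h => hnA ⟨hmax.1, Or.inl h⟩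
    rw [hm, ← Nat.cast_one, ← ENat.natCast_sub, Nat.cast_le] at this
    omega
  have hmr := le_rRow_of_mem hmD
  rw [mem_Icc] at hc
  rw [hAS.2.1.mem_iff]
  constructor
  · rintro ⟨h₁, -⟩
    have hp := (hAS.le_of_lRow_ne_top (ne_top_of_le_ne_top (ENat.natCast_ne_top c) h₁)).1
    rw [← hl]
    refine hAS.2.2.2.lRow_le_of_lt hik hmax.1 hp hpi (h₁.trans_lt ?_)
    rw [hm, Nat.cast_lt]
    omega
  · intro h
    have hp := (hAS.le_of_lRow_ne_top (ne_top_of_le_ne_top (ENat.natCast_ne_top l) h)).1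
    have := hAS.rRow_antitone hp (show p ≤ i - 1 by omega)
    exact ⟨h.trans (Nat.cast_le.2 hc.1), by omega⟩

theorem exists_perm_col_of_isStepB (hAS : AlmostSkew D k) (hmax : MaxViolation D i)
    (hnA : ¬StepAOk D i) (hDB : IsStepB D DB i) :
    ∃ κ : Equiv.Perm ℕ, ∀ p q, (p, κ q) ∈ DB ↔ (p, q) ∈ D := by
  obtain ⟨l, hl, -⟩ := exists_mem_lRow_eq (ne_top_of_lt hmax.1.2)
  have hi := hmax.1.1
  have hbelow (p q : ℕ) (hip : i ≤ p) (h : (p, q) ∈ D) : q ∈ Icc l (rRow D i + 1) := by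
    rw [hAS.2.1.mem_iff] at h
    have h₁ := (hl ▸ hmax.lRow_mono le_rfl hip).trans h.1
    have h₂ := h.2.trans (hAS.rRow_antitone (by omega) hip)
    rw [Nat.cast_le] at h₁
    exact mem_Icc.2 ⟨h₁, by omega⟩
  refine exists_perm_col_of_card_row_eq (Icc l (rRow D i + 1))
    (fun p q hp => ((hDB p q).2 fun h => by have := h.1; omega).symm)
    (fun p c c' hp hc hc' h => (mem_iff_lRow_le_of_not_stepAOk hAS hmax hl hnA hp hc').2
      ((mem_iff_lRow_le_of_not_stepAOk hAS hmax hl hnA hp hc).1 h))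
    hbelow (fun p q hip h => ?_) (topJustifiedFrom_of_maxViolation hAS hmax)
    (topJustifiedFrom_of_isStepB hAS hmax hl hDB)
    (fun p _ => (card_row_of_isStepB hAS.2.1 hDB hl p).symm)
  by_cases hp : BRow D i p
  · rw [isStepB_mem_iff_of_bRow hAS.2.1 hDB hl hp] at h
    have := hAS.rRow_antitone (p := i) (q := p) (by omega) hip
    exact mem_Icc.2 ⟨by omega, by omega⟩
  · exact hbelow p q hip (((hDB p q).2 hp).1 h)

end StepB

/-- For an almost skew diagram `D` and `i` the maximum index with
`l_{i-1} > l_i`: if only Step A is permitted, then `V^{D^A} ≅ V^D`, and if only Step B is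
permitted, then `V^{D^B} ≅ V^D`, as `ℂ[Σ_D]`-modules (box sets identified by any
bijection). -/
theorem statement19 (D : Dg) (k i : ℕ) (hAS : AlmostSkew D k) (hmax : MaxViolation D i) :
    (∀ DA : Dg, StepAOk D i → ¬ StepBOk D i → IsStepA D DA i →
      ∀ φ : {x : ℕ × ℕ // x ∈ D} ≃ {x : ℕ × ℕ // x ∈ DA},
        Nonempty ((Submodule.span (MonoidAlgebra ℂ (Equiv.Perm {x : ℕ × ℕ // x ∈ D}))
            {Csum (fun b : {x : ℕ × ℕ // x ∈ D} => (φ b).val.2) *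
              Rsum (fun b : {x : ℕ × ℕ // x ∈ D} => (φ b).val.1)}) ≃ₗ[MonoidAlgebra ℂ
              (Equiv.Perm {x : ℕ × ℕ // x ∈ D})]
          (Submodule.span (MonoidAlgebra ℂ (Equiv.Perm {x : ℕ × ℕ // x ∈ D}))
            {Csum (fun b : {x : ℕ × ℕ // x ∈ D} => b.val.2) *
              Rsum (fun b : {x : ℕ × ℕ // x ∈ D} => b.val.1)}))) ∧
    (∀ DB : Dg, StepBOk D i → ¬ StepAOk D i → IsStepB D DB i →
      ∀ ψ : {x : ℕ × ℕ // x ∈ D} ≃ {x : ℕ × ℕ // x ∈ DB},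
        Nonempty ((Submodule.span (MonoidAlgebra ℂ (Equiv.Perm {x : ℕ × ℕ // x ∈ D}))
            {Csum (fun b : {x : ℕ × ℕ // x ∈ D} => (ψ b).val.2) *
              Rsum (fun b : {x : ℕ × ℕ // x ∈ D} => (ψ b).val.1)}) ≃ₗ[MonoidAlgebra ℂ
              (Equiv.Perm {x : ℕ × ℕ // x ∈ D})]
          (Submodule.span (MonoidAlgebra ℂ (Equiv.Perm {x : ℕ × ℕ // x ∈ D}))
            {Csum (fun b : {x : ℕ × ℕ // x ∈ D} => b.val.2) *
              Rsum (fun b : {x : ℕ × ℕ // x ∈ D} => b.val.1)}))) := by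
  refine ⟨fun DA _ hnB hDA φ => ?_, fun DB _ hnA hDB ψ => ?_⟩
  · exact nonempty_spechtModule_equiv_of_mem_iff (Equiv.swap (i - 1) i) 1
      (isStepA_mem_swap_iff hAS hmax.1 hnB hDA) φ
  · obtain ⟨κ, hκ⟩ := exists_perm_col_of_isStepB hAS hmax hnA hDB
    exact nonempty_spechtModule_equiv_of_mem_iff 1 κ hκ ψ
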